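/- For every digraph G on n vertices, the minimum quantifier depth of a sentence in the class Λ_{1/2} defining G is at least log* n − log* log* n − 1; equivalently, q_{1/2}(n) ≥ log* n − log* log* n − 1 for all n, where q_{1/2}(n) is the minimum over all digraphs G of order n of this minimum quantifier depth. -/

import Mathlib

namespace PaperFO

/-- First-order formulas in a language with equality `eq` and one binary
relation symbol `rel` (adjacency `~` for graphs, the arc relation `↦` for
digraphs).  Variables are indexed by natural numbers (variable `xᵢ` of the
paper corresponds to `i - 1 : ℕ`). -/
inductive Fml : Type
  | eq : ℕ → ℕ → Fml
  | rel : ℕ → ℕ → Fml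
  | not : Fml → Fml
  | and : Fml → Fml → Fml
  | or : Fml → Fml → Fml
  | all : ℕ → Fml → Fml
  | ex : ℕ → Fml → Fml

namespace Fml

/-- Truth of a formula in the structure `(V, r)` under the assignment `σ`. -/
def eval {V : Type} (r : V → V → Prop) (σ : ℕ → V) : Fml → Prop
  | eq i j => σ i = σ j
  | rel i j => r (σ i) (σ j)
  | not φ => ¬ eval r σ φ
  | and φ ψ => eval r σ φ ∧ eval r σ ψ
  | or φ ψ => eval r σ φ ∨ eval r σ ψ
  | all i φ => ∀ v : V, eval r (Function.update σ i v) φ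
  | ex i φ => ∃ v : V, eval r (Function.update σ i v) φ

/-- The free variables of a formula. -/
def freeVars : Fml → Finset ℕ
  | eq i j => {i, j}
  | rel i j => {i, j}
  | not φ => freeVars φ
  | and φ ψ => freeVars φ ∪ freeVars ψ
  | or φ ψ => freeVars φ ∪ freeVars ψ
  | all i φ => (freeVars φ).erase i
  | ex i φ => (freeVars φ).erase i

/-- A sentence is a formula without free variables. -/
def IsSentence (φ : Fml) : Prop := φ.freeVars = ∅

/-- The quantifier depth (= quantifier rank) of a formula: the maximum
number of nested quantifiers. -/
def depth : Fml → ℕ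
  | eq _ _ => 0
  | rel _ _ => 0
  | not φ => depth φ
  | and φ ψ => max (depth φ) (depth ψ)
  | or φ ψ => max (depth φ) (depth ψ)
  | all _ φ => depth φ + 1
  | ex _ φ => depth φ + 1

/-- A formula is atomic if it is of the form `x = y` or `x ~ y`. -/
def IsAtomic : Fml → Prop
  | eq _ _ => True
  | rel _ _ => True
  | _ => False

/-- Negations occur only in front of atomic subformulas. -/
def NegAtomic : Fml → Prop
  | eq _ _ => True
  | rel _ _ => True
  | not φ => IsAtomic φ
  | and φ ψ => NegAtomic φ ∧ NegAtomic ψ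
  | or φ ψ => NegAtomic φ ∧ NegAtomic ψ
  | all _ φ => NegAtomic φ
  | ex _ φ => NegAtomic φ

/-- The set of maximal sequences of nested quantifiers of a formula,
recorded as lists of Booleans read from the outermost quantifier inwards
(`true` = `∃`, `false` = `∀`).  Every sequence of nested quantifiers of the
formula is a (contiguous) subsequence of one of these. -/
def qstrings : Fml → Set (List Bool)
  | eq _ _ => {[]}
  | rel _ _ => {[]}
  | not φ => qstrings φ
  | and φ ψ => qstrings φ ∪ qstrings ψ
  | or φ ψ => qstrings φ ∪ qstrings ψ
  | all _ φ => (List.cons false) '' qstrings φ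
  | ex _ φ => (List.cons true) '' qstrings φ

end Fml

/-- The number of quantifier alternations (occurrences of `∀∃` or `∃∀`) in a
sequence of nested quantifiers. -/
def altCount : List Bool → ℕ
  | [] => 0
  | [_] => 0
  | a :: b :: l => (if a = b then 0 else 1) + altCount (b :: l)

namespace Fml

/-- Every sequence of nested quantifiers has at most `a` quantifier
alternations. -/
def AltLe (φ : Fml) (a : ℕ) : Prop := ∀ s ∈ φ.qstrings, altCount s ≤ a

/-- An `a`-alternating formula: negations occur only in front of atomic
subformulas and every sequence of nested quantifiers has at most `a`
quantifier alternations. -/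
def AltFml (a : ℕ) (φ : Fml) : Prop := φ.NegAtomic ∧ φ.AltLe a

/-- A 0-alternating formula: negations occur only in front of atomic
subformulas and no sequence of nested quantifiers contains a quantifier
alternation. -/
def ZeroAlt (φ : Fml) : Prop := φ.NegAtomic ∧ φ.AltLe 0

end Fml

/-- `logStar n` is the minimum number of iterations of the binary logarithm
needed to bring `n` to `1` or below. -/
def logStar (n : ℕ) : ℕ :=
  if h : n ≤ 1 then 0 else logStar (Nat.log 2 n) + 1
decreasing_by exact Nat.log_lt_self 2 (by omega)

/-- The tower function: `tower 0 = 1`, `tower (i+1) = 2 ^ tower i`. -/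
def tower : ℕ → ℕ
  | 0 => 1
  | i + 1 => 2 ^ tower i

end PaperFO

namespace PaperFO

/-- A sentence is true on the digraph `(V, r)` (digraphs interpret `Fml.rel`
as the arc relation `↦`). -/
def DModels {V : Type} (r : V → V → Prop) (φ : Fml) : Prop :=
  ∀ σ : ℕ → V, φ.eval r σ

/-- Isomorphism of digraphs. -/
def DIso {V W : Type} (r : V → V → Prop) (r' : W → W → Prop) : Prop :=
  ∃ e : V ≃ W, ∀ a b : V, r a b ↔ r' (e a) (e b)

/-- The sentence `φ` defines the digraph `(V, r)`: it is a sentence, it is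
true on `(V, r)`, and it fails on every (finite, nonempty) digraph not
isomorphic to `(V, r)`. -/
def DDefines {V : Type} (r : V → V → Prop) (φ : Fml) : Prop :=
  φ.IsSentence ∧ DModels r φ ∧
    ∀ (W : Type) (_ : Fintype W) (_ : Nonempty W) (r' : W → W → Prop),
      ¬ DIso r r' → ¬ DModels r' φ

end PaperFO

namespace PaperFO
namespace Fml

/-- The length of a formula: the total number of symbols (an atomic formula
`x = y` or `x ~ y` contributes `3` symbols, a negation `1`, a binary
connective `1`, and a quantifier together with its variable `2`). -/
def len : Fml → ℕ
  | eq _ _ => 3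
  | rel _ _ => 3
  | not φ => len φ + 1
  | and φ ψ => len φ + len ψ + 1
  | or φ ψ => len φ + len ψ + 1
  | all _ φ => len φ + 2
  | ex _ φ => len φ + 2

/-- The number of occurrences of the existential quantifier. -/
def exCount : Fml → ℕ
  | eq _ _ => 0
  | rel _ _ => 0
  | not φ => exCount φ
  | and φ ψ => exCount φ + exCount ψ
  | or φ ψ => exCount φ + exCount ψ
  | all _ φ => exCount φ
  | ex _ φ => exCount φ + 1

/-- The total number of quantifier occurrences. -/
def qCount : Fml → ℕ
  | eq _ _ => 0
  | rel _ _ => 0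
  | not φ => qCount φ
  | and φ ψ => qCount φ + qCount ψ
  | or φ ψ => qCount φ + qCount ψ
  | all _ φ => qCount φ + 1
  | ex _ φ => qCount φ + 1

/-- Implication `A ⇒ B`, a shorthand for `(¬ A) ∨ B`. -/
def imp (A B : Fml) : Fml := .or (.not A) B

end Fml
end PaperFO

namespace PaperFO

/-- The sentence `A` is an `F`-description of the digraph `(V, r)`:
`(V,r) ⊨ A` and, for every `B ∈ F` with `(V,r) ⊨ B`, the implication
`A ⇒ B` is true on every (finite, nonempty) digraph. -/
def FDescr (F : Set Fml) {V : Type} (r : V → V → Prop) (A : Fml) : Prop :=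
  DModels r A ∧
    ∀ B ∈ F, DModels r B →
      ∀ (W : Type) (_ : Fintype W) (_ : Nonempty W) (r' : W → W → Prop),
        DModels r' (A.imp B)

/-- `G, ū ⊨ A(x_1,…,x_s)` : the formula `A`, whose free variables are among
`x_1, …, x_s`, is true on the digraph `(V, r)` with each `xᵢ` assigned `u i`. -/
def DModelsT {V : Type} (r : V → V → Prop) {s : ℕ} (u : Fin s → V) (A : Fml) : Prop :=
  ∀ σ : ℕ → V, (∀ i : Fin s, σ i.1 = u i) → A.eval r σ

/-- `G, ū ≡ H, v̄ (mod F)` : for every formula `A ∈ F`, `G, ū ⊨ A` exactly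
when `H, v̄ ⊨ A`. -/
def EquivModT (F : Set Fml) {s : ℕ} {V W : Type}
    (r : V → V → Prop) (u : Fin s → V) (r' : W → W → Prop) (v : Fin s → W) : Prop :=
  ∀ A ∈ F, (DModelsT r u A ↔ DModelsT r' v A)

/-- The formula `A(x_1,…,x_s)` is an `F`-description of `(G, ū)`:
`G, ū ⊨ A` and, for every `B ∈ F` with `G, ū ⊨ B`, the implication `A ⇒ B`
is true on all (finite, nonempty) digraphs with `s` designated vertices. -/
def FDescrT (F : Set Fml) {V : Type} (r : V → V → Prop) {s : ℕ} (u : Fin s → V)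
    (A : Fml) : Prop :=
  DModelsT r u A ∧
    ∀ B ∈ F, DModelsT r u B →
      ∀ (W : Type) (_ : Fintype W) (_ : Nonempty W) (r' : W → W → Prop) (v : Fin s → W),
        DModelsT r' v (A.imp B)

/-- The class `Λ_{1/2}`: formulas with negations only in front of atomic
subformulas such that every sequence of nested quantifiers either has no
quantifier alternation, or has at most one alternation and starts with `∃`. -/
def Lambda12 (φ : Fml) : Prop :=
  φ.NegAtomic ∧
    ∀ s ∈ φ.qstrings, altCount s = 0 ∨ (altCount s ≤ 1 ∧ s.head? = some true)

end PaperFO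

namespace PaperFO

/-!
A `Λ_{1/2}` sentence never has an `∃` in the scope of a `∀`, so it is a positive combination of
existential quantifications of universal formulas. Universal formulas pass from a digraph to its
induced subdigraphs, and an existential witness may be replaced by any vertex of the same rank-`k`
type over the tuple chosen so far. Hence a sentence of depth `d` true in `G` stays true in the
subdigraph induced by a set `S` that contains, along every branch of choices, one vertex of each
such type. If the sentence defines `G`, then `G ≅ G[S]`. The atomic diagram of a `d`-tuple takes
`2d²` bits, and counting types bounds `|S|` by a tower of `d` twos topped by `4d² + 2d + 1`;
taking `log*` gives the claim.
-/

open Finset Function Classical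

theorem strictMono_iterate_two_pow (k : ℕ) : StrictMono (2 ^ · : ℕ → ℕ)^[k] :=
  (pow_right_strictMono₀ one_lt_two).iterate k

theorem le_iterate_two_pow (k x : ℕ) : x ≤ (2 ^ ·)^[k] x :=
  (strictMono_iterate_two_pow k).id_le x

theorem two_mul_iterate_two_pow_le (k y : ℕ) :
    2 * (2 ^ ·)^[k + 1] y ≤ (2 ^ ·)^[k + 1] (y + 1) := by
  simp only [iterate_succ_apply']
  rw [← pow_succ']
  exact Nat.pow_le_pow_right two_pos (strictMono_iterate_two_pow k (Nat.lt_succ_self y))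

theorem add_iterate_two_pow_le {c y : ℕ} (hc : c ≤ y) (k : ℕ) :
    c + (2 ^ ·)^[k + 1] y ≤ (2 ^ ·)^[k + 1] (y + 1) := by
  have := two_mul_iterate_two_pow_le k y
  have := le_iterate_two_pow (k + 1) y
  omega

theorem two_mul_iterate_two_pow_add_one_le {y : ℕ} (hy : 1 ≤ y) :
    ∀ k, 2 * (2 ^ ·)^[k] y + 1 ≤ (2 ^ ·)^[k] (2 * y + 1)
  | 0 => le_rfl
  | k + 1 => by
    have := two_mul_iterate_two_pow_le k y
    have := strictMono_iterate_two_pow (k + 1) (show y + 1 < 2 * y + 1 by omega)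
    omega

theorem sq_iterate_two_pow_add_one_le {y : ℕ} (hy : 1 ≤ y) (k : ℕ) :
    ((2 ^ ·)^[k + 1] y) ^ 2 + 1 ≤ (2 ^ ·)^[k + 1] (2 * y + 1) := by
  simp only [iterate_succ_apply']
  calc (2 ^ (2 ^ ·)^[k] y) ^ 2 + 1 ≤ 2 ^ (2 * (2 ^ ·)^[k] y + 1) := by
        rw [← pow_mul, mul_comm, pow_succ]
        have := Nat.one_le_two_pow (n := 2 * (2 ^ ·)^[k] y)
        omega
    _ ≤ _ := Nat.pow_le_pow_right two_pos (two_mul_iterate_two_pow_add_one_le hy k)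

theorem logStar_of_le_one {n : ℕ} (h : n ≤ 1) : logStar n = 0 := by
  rw [logStar, dif_pos h]

theorem logStar_of_one_lt {n : ℕ} (h : 1 < n) : logStar n = logStar (Nat.log 2 n) + 1 := by
  rw [logStar, dif_neg (not_le.mpr h)]

theorem logStar_mono : Monotone logStar := by
  intro m n hmn
  induction n using Nat.strong_induction_on generalizing m with
  | _ n ih =>
    rcases le_or_gt m 1 with hm | hm
    · rw [logStar_of_le_one hm]
      exact Nat.zero_le _
    · rw [logStar_of_one_lt hm, logStar_of_one_lt (hm.trans_le hmn)]
      exact Nat.succ_le_succ (ih _ (Nat.log_lt_self 2 (by omega)) (Nat.log_mono_right hmn))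

theorem logStar_two_pow {x : ℕ} (hx : 1 ≤ x) : logStar (2 ^ x) = logStar x + 1 := by
  rw [logStar_of_one_lt (Nat.one_lt_two_pow (by omega)), Nat.log_pow one_lt_two]

theorem logStar_iterate_two_pow {x : ℕ} (hx : 1 ≤ x) :
    ∀ k, logStar ((2 ^ ·)^[k] x) = logStar x + k
  | 0 => rfl
  | k + 1 => by
    rw [iterate_succ_apply', logStar_two_pow (hx.trans (le_iterate_two_pow k x)),
      logStar_iterate_two_pow hx k, add_assoc]

theorem two_mul_add_le_two_pow (d : ℕ) : 2 * (2 * d ^ 2 + d) + 1 ≤ 2 ^ (d + 3) := by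
  induction d with
  | zero => norm_num
  | succ d ih =>
    have := Nat.lt_two_pow_self (n := d)
    have hpow : 2 ^ (d + 3) = 8 * 2 ^ d := by ring
    rw [show 2 ^ (d + 1 + 3) = 16 * 2 ^ d by ring]
    nlinarith

theorem logStar_le_of_le_iterate_two_pow {n d : ℕ}
    (h : n ≤ (2 ^ ·)^[d] (2 * (2 * d ^ 2 + d) + 1)) :
    logStar n ≤ d + logStar (logStar n) + 1 := by
  set L := logStar n
  by_contra! hcontra
  have hlogL : 1 ≤ logStar L := by
    rw [logStar_of_one_lt (show 1 < L by omega)]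
    omega
  have hL : L ≤ logStar (2 * (2 * d ^ 2 + d) + 1) + d := by
    rw [← logStar_iterate_two_pow (by omega) d]
    exact logStar_mono h
  have hp := logStar_mono ((two_mul_add_le_two_pow d).trans
    (Nat.pow_le_pow_right two_pos (show d + 3 ≤ L by omega)))
  rw [logStar_two_pow (by omega)] at hp
  omega

noncomputable def fiberReprs {α β : Type*} [Fintype α] [Nonempty α] [DecidableEq α] [DecidableEq β]
    (f : α → β) : Finset α :=
  (univ.image f).image (invFun f)

section FiberReprs

variable {α β : Type*} [Fintype α] [Nonempty α] [DecidableEq α] [DecidableEq β]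

theorem exists_mem_fiberReprs (f : α → β) (a : α) : ∃ b ∈ fiberReprs f, f b = f a :=
  ⟨invFun f (f a), mem_image_of_mem _ (mem_image_of_mem _ (mem_univ a)), invFun_eq ⟨a, rfl⟩⟩

theorem card_fiberReprs_le [Fintype β] (f : α → β) : (fiberReprs f).card ≤ Fintype.card β :=
  card_image_le.trans (card_le_univ _)

end FiberReprs

section RankType

abbrev Diagram (s : ℕ) : Type := Fin s × Fin s → Bool × Bool

noncomputable def diagram {V : Type} (r : V → V → Prop) {s : ℕ} (u : Fin s → V) : Diagram s :=
  fun p => (decide (u p.1 = u p.2), decide (r (u p.1) (u p.2)))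

def RankType : ℕ → ℕ → Type
  | 0, s => Diagram s
  | k + 1, s => Diagram s × Finset (RankType k (s + 1))

instance instFintypeRankType : ∀ k s, Fintype (RankType k s)
  | 0, s => inferInstanceAs (Fintype (Diagram s))
  | k + 1, s =>
    letI := instFintypeRankType k (s + 1)
    inferInstanceAs (Fintype (Diagram s × Finset (RankType k (s + 1))))

/-- The rank-`k` Hintikka type of the tuple `u`. -/
noncomputable def rankType {V : Type} [Fintype V] (r : V → V → Prop) :
    (k : ℕ) → {s : ℕ} → (Fin s → V) → RankType k s
  | 0, _, u => diagram r u
  | k + 1, _, u =>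
    ((diagram r u, univ.image fun a => rankType r k (Fin.cons a u)) :
      Diagram _ × Finset (RankType k _))

noncomputable def witnesses {V : Type} [Fintype V] [Nonempty V] (r : V → V → Prop) :
    (k : ℕ) → {s : ℕ} → (Fin s → V) → Finset V
  | 0, _, _ => ∅
  | k + 1, _, u => (fiberReprs fun a => rankType r k (Fin.cons a u)).biUnion
      fun b => insert b (witnesses r k (Fin.cons b u))

variable {V W : Type} [Fintype V] [Fintype W] {r : V → V → Prop} {r' : W → W → Prop}

theorem diagram_eq_of_rankType_eq : ∀ {k s : ℕ} {u : Fin s → V} {u' : Fin s → W},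
    rankType r k u = rankType r' k u' → diagram r u = diagram r' u'
  | 0, _, _, _, h => h
  | _ + 1, _, _, _, h => congrArg Prod.fst h

theorem exists_rankType_cons_eq {k s : ℕ} {u : Fin s → V} {u' : Fin s → W}
    (h : rankType r (k + 1) u = rankType r' (k + 1) u') (a : V) :
    ∃ a', rankType r k (Fin.cons a u) = rankType r' k (Fin.cons a' u') := by
  have ha : rankType r k (Fin.cons a u) ∈ univ.image fun a => rankType r k (Fin.cons a u) :=
    mem_image_of_mem _ (mem_univ a)
  rw [show univ.image (fun a => rankType r k (Fin.cons a u)) = _ from congrArg Prod.snd h] at ha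
  obtain ⟨a', -, ha'⟩ := mem_image.mp ha
  exact ⟨a', ha'.symm⟩

theorem card_diagram (s : ℕ) : Fintype.card (Diagram s) = 2 ^ (2 * s ^ 2) := by
  simp only [Diagram, Fintype.card_fun, Fintype.card_prod, Fintype.card_fin, Fintype.card_bool]
  rw [sq, pow_mul 2 2 (s * s)]
  norm_num

theorem card_rankType_succ (k s : ℕ) : Fintype.card (RankType (k + 1) s) =
    Fintype.card (Diagram s) * 2 ^ Fintype.card (RankType k (s + 1)) := by
  rw [← Fintype.card_finset]
  exact Fintype.card_prod _ _

theorem card_rankType_le {c : ℕ} : ∀ {k s : ℕ}, 2 * (s + k) ^ 2 ≤ c →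
    Fintype.card (RankType k s) ≤ (2 ^ ·)^[k + 1] (c + k)
  | 0, s, hc => by
    rw [show Fintype.card (RankType 0 s) = Fintype.card (Diagram s) from rfl, card_diagram]
    exact Nat.pow_le_pow_right two_pos hc
  | k + 1, s, hc => by
    have ih := card_rankType_le (k := k) (s := s + 1) (by convert hc using 3; omega)
    have hs : 2 * s ^ 2 ≤ c := le_trans (by gcongr; omega) hc
    rw [card_rankType_succ, card_diagram, ← pow_add, iterate_succ_apply' _ (k + 1)]
    exact Nat.pow_le_pow_right two_pos
      ((add_le_add hs ih).trans (add_iterate_two_pow_le (by omega) k))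

theorem exists_mem_witnesses_rankType_eq [Nonempty V] {k s : ℕ} (u : Fin s → V) (a : V) :
    ∃ b ∈ witnesses r (k + 1) u, rankType r k (Fin.cons b u) = rankType r k (Fin.cons a u) ∧
      witnesses r k (Fin.cons b u) ⊆ witnesses r (k + 1) u := by
  obtain ⟨b, hb, hab⟩ := exists_mem_fiberReprs (fun a => rankType r k (Fin.cons a u)) a
  have hsub : insert b (witnesses r k (Fin.cons b u)) ⊆ witnesses r (k + 1) u :=
    subset_biUnion_of_mem (fun b => insert b (witnesses r k (Fin.cons b u))) hb
  exact ⟨b, hsub (mem_insert_self _ _), hab, (subset_insert _ _).trans hsub⟩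

theorem card_witnesses_succ_le [Nonempty V] {k s M : ℕ} (u : Fin s → V)
    (hM : ∀ b, (witnesses r k (Fin.cons b u)).card + 1 ≤ M) :
    (witnesses r (k + 1) u).card ≤ Fintype.card (RankType k (s + 1)) * M :=
  calc (witnesses r (k + 1) u).card
      ≤ ∑ b ∈ fiberReprs fun a => rankType r k (Fin.cons a u),
          (insert b (witnesses r k (Fin.cons b u))).card := card_biUnion_le
    _ ≤ ∑ _b ∈ fiberReprs fun a => rankType r k (Fin.cons a u), M :=
        sum_le_sum fun b _ => (card_insert_le _ _).trans (hM b)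
    _ ≤ Fintype.card (RankType k (s + 1)) * M := by
        rw [sum_const, smul_eq_mul]
        exact Nat.mul_le_mul_right _ (card_fiberReprs_le _)

theorem card_witnesses_add_one_le [Nonempty V] {c : ℕ} : ∀ {k s : ℕ} (u : Fin s → V),
    2 * (s + k) ^ 2 ≤ c → (witnesses r k u).card + 1 ≤ (2 ^ ·)^[k] (2 * (c + k) + 1)
  | 0, _, _, _ => by simp [witnesses]
  | k + 1, s, u, hc => by
    have hc' : 2 * (s + 1 + k) ^ 2 ≤ c := by convert hc using 3; omega
    set E := (2 ^ · : ℕ → ℕ)^[k + 1] (c + k + 1)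
    have htypes : Fintype.card (RankType k (s + 1)) ≤ E := (card_rankType_le hc').trans
      ((strictMono_iterate_two_pow (k + 1)).monotone (Nat.le_succ _))
    have hwitnesses b : (witnesses r k (Fin.cons b u)).card + 1 ≤ E := by
      refine (card_witnesses_add_one_le _ hc').trans ((strictMono_iterate_two_pow k).monotone ?_)
      have := Nat.lt_two_pow_self (n := c + k)
      change _ ≤ 2 ^ (c + k + 1)
      rw [pow_succ]
      omega
    have := (card_witnesses_succ_le u hwitnesses).trans (Nat.mul_le_mul_right E htypes)
    calc (witnesses r (k + 1) u).card + 1 ≤ E ^ 2 + 1 := by rw [sq]; omega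
      _ ≤ _ := sq_iterate_two_pow_add_one_le (by omega) k

end RankType

theorem exists_update_cons {V W : Type} {s i : ℕ} {σ : ℕ → V} {σ' : ℕ → W} {u : Fin s → V}
    {u' : Fin s → W} {X : Finset ℕ} (h : ∀ x ∈ X.erase i, ∃ j, σ x = u j ∧ σ' x = u' j)
    (a : V) (a' : W) :
    ∀ x ∈ X, ∃ j, update σ i a x = (Fin.cons a u : Fin (s + 1) → V) j ∧
      update σ' i a' x = (Fin.cons a' u' : Fin (s + 1) → W) j := by
  intro x hx
  by_cases hxi : x = i
  · subst hxi
    exact ⟨0, by simp⟩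
  · obtain ⟨j, hj, hj'⟩ := h x (mem_erase.mpr ⟨hxi, hx⟩)
    exact ⟨j.succ, by simp [update_of_ne hxi, hj, hj']⟩

theorem isChain_ge_of_altCount : ∀ {s : List Bool},
    altCount s = 0 ∨ (altCount s ≤ 1 ∧ s.head? = some true) → s.IsChain (· ≥ ·)
  | [], _ => .nil
  | [_], _ => .singleton _
  | a :: b :: l, h => by
    have ih := @isChain_ge_of_altCount (b :: l)
    simp only [altCount, List.head?, Option.some.injEq] at h
    rw [List.isChain_cons_cons]
    cases a <;> cases b <;> simp_all

namespace Fml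

theorem eval_iff_of_rankType_eq {V W : Type} [Fintype V] [Fintype W] {r : V → V → Prop}
    {r' : W → W → Prop} :
    ∀ (φ : Fml) {k s : ℕ} {u : Fin s → V} {u' : Fin s → W} {σ : ℕ → V} {σ' : ℕ → W},
      φ.depth ≤ k → rankType r k u = rankType r' k u' →
      (∀ x ∈ φ.freeVars, ∃ j, σ x = u j ∧ σ' x = u' j) → (φ.eval r σ ↔ φ.eval r' σ')
  | eq x y, _, _, _, _, _, _, _, htype, h => by
    obtain ⟨p, hp, hp'⟩ := h x (by simp [freeVars])
    obtain ⟨q, hq, hq'⟩ := h y (by simp [freeVars])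
    have := congrArg (fun D => (D (p, q)).1) (diagram_eq_of_rankType_eq htype)
    simpa [eval, diagram, hp, hp', hq, hq'] using this
  | rel x y, _, _, _, _, _, _, _, htype, h => by
    obtain ⟨p, hp, hp'⟩ := h x (by simp [freeVars])
    obtain ⟨q, hq, hq'⟩ := h y (by simp [freeVars])
    have := congrArg (fun D => (D (p, q)).2) (diagram_eq_of_rankType_eq htype)
    simpa [eval, diagram, hp, hp', hq, hq'] using this
  | not φ, _, _, _, _, _, _, hk, htype, h => not_congr (eval_iff_of_rankType_eq φ hk htype h)
  | and φ ψ, _, _, _, _, _, _, hk, htype, h => by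
    simp only [depth, max_le_iff] at hk
    exact and_congr (eval_iff_of_rankType_eq φ hk.1 htype fun x hx => h x (mem_union_left _ hx))
      (eval_iff_of_rankType_eq ψ hk.2 htype fun x hx => h x (mem_union_right _ hx))
  | or φ ψ, _, _, _, _, _, _, hk, htype, h => by
    simp only [depth, max_le_iff] at hk
    exact or_congr (eval_iff_of_rankType_eq φ hk.1 htype fun x hx => h x (mem_union_left _ hx))
      (eval_iff_of_rankType_eq ψ hk.2 htype fun x hx => h x (mem_union_right _ hx))
  | all i φ, k + 1, _, u, u', _, _, hk, htype, h => by
    have step a a' (ht : rankType r k (Fin.cons a u) = rankType r' k (Fin.cons a' u')) :=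
      eval_iff_of_rankType_eq φ (Nat.le_of_succ_le_succ hk) ht (exists_update_cons h a a')
    refine ⟨fun H a' => ?_, fun H a => ?_⟩
    · obtain ⟨a, ha⟩ := exists_rankType_cons_eq htype.symm a'
      exact (step a a' ha.symm).mp (H a)
    · obtain ⟨a', ha'⟩ := exists_rankType_cons_eq htype a
      exact (step a a' ha').mpr (H a')
  | ex i φ, k + 1, _, u, u', _, _, hk, htype, h => by
    have step a a' (ht : rankType r k (Fin.cons a u) = rankType r' k (Fin.cons a' u')) :=
      eval_iff_of_rankType_eq φ (Nat.le_of_succ_le_succ hk) ht (exists_update_cons h a a')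
    refine ⟨fun ⟨a, H⟩ => ?_, fun ⟨a', H⟩ => ?_⟩
    · obtain ⟨a', ha'⟩ := exists_rankType_cons_eq htype a
      exact ⟨a', (step a a' ha').mp H⟩
    · obtain ⟨a, ha⟩ := exists_rankType_cons_eq htype.symm a'
      exact ⟨a, (step a a' ha.symm).mpr H⟩
  | all _ _, 0, _, _, _, _, _, hk, _, _ | ex _ _, 0, _, _, _, _, _, hk, _, _ =>
    absurd hk (Nat.not_succ_le_zero _)

theorem eval_comap_of_exCount_eq_zero {V W : Type} {r : V → V → Prop} {f : W → V}
    (hf : Injective f) :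
    ∀ (φ : Fml) {σ : ℕ → W}, φ.NegAtomic → φ.exCount = 0 →
      φ.eval r (f ∘ σ) → φ.eval (fun a b => r (f a) (f b)) σ
  | eq _ _, _, _, _, h => hf h
  | rel _ _, _, _, _, h => h
  | not (eq _ _), _, _, _, h => fun h' => h (congrArg f h')
  | not (rel _ _), _, _, _, h => h
  | not (not _), _, hneg, _, _ | not (and _ _), _, hneg, _, _ | not (or _ _), _, hneg, _, _
  | not (all _ _), _, hneg, _, _ | not (ex _ _), _, hneg, _, _ => nomatch hneg
  | and φ ψ, _, hneg, hex, h =>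
    ⟨eval_comap_of_exCount_eq_zero hf φ hneg.1 (Nat.add_eq_zero_iff.mp hex).1 h.1,
      eval_comap_of_exCount_eq_zero hf ψ hneg.2 (Nat.add_eq_zero_iff.mp hex).2 h.2⟩
  | or φ ψ, _, hneg, hex, h => h.imp
      (eval_comap_of_exCount_eq_zero hf φ hneg.1 (Nat.add_eq_zero_iff.mp hex).1)
      (eval_comap_of_exCount_eq_zero hf ψ hneg.2 (Nat.add_eq_zero_iff.mp hex).2)
  | all i φ, σ, hneg, hex, h => fun w =>
    eval_comap_of_exCount_eq_zero hf φ hneg hex (by rw [comp_update]; exact h (f w))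
  | ex _ _, _, _, hex, _ => absurd hex (Nat.succ_ne_zero _)

theorem qstrings_nonempty : ∀ φ : Fml, φ.qstrings.Nonempty
  | eq _ _ | rel _ _ => ⟨[], rfl⟩
  | not φ => qstrings_nonempty φ
  | and φ _ | or φ _ => (qstrings_nonempty φ).mono Set.subset_union_left
  | all _ φ | ex _ φ => (qstrings_nonempty φ).image _

theorem exCount_eq_zero_of_forall_qstrings :
    ∀ φ : Fml, (∀ s ∈ φ.qstrings, true ∉ s) → φ.exCount = 0
  | eq _ _, _ | rel _ _, _ => rfl
  | not φ, h => exCount_eq_zero_of_forall_qstrings φ h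
  | and φ ψ, h | or φ ψ, h => by
    rw [exCount, exCount_eq_zero_of_forall_qstrings φ fun s hs => h s (Or.inl hs),
      exCount_eq_zero_of_forall_qstrings ψ fun s hs => h s (Or.inr hs)]
  | all _ φ, h => exCount_eq_zero_of_forall_qstrings φ fun s hs ht =>
    h (false :: s) ⟨s, hs, rfl⟩ (List.mem_cons_of_mem _ ht)
  | ex _ φ, h => absurd List.mem_cons_self
    (h _ ⟨_, (qstrings_nonempty φ).some_mem, rfl⟩)

/-- Every sequence of nested quantifiers has the form `∃ ⋯ ∃ ∀ ⋯ ∀` (recall `false < true`). -/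
def IsExistsForall (φ : Fml) : Prop := ∀ s ∈ φ.qstrings, s.Pairwise (· ≥ ·)

theorem eval_comap_of_isExistsForall {V W : Type} [Fintype V] [Nonempty V]
    {r : V → V → Prop} {f : W → V} (hf : Injective f) :
    ∀ (φ : Fml) {k s : ℕ} {u : Fin s → V} {σ : ℕ → W}, φ.NegAtomic → φ.IsExistsForall →
      φ.depth ≤ k → ↑(witnesses r k u) ⊆ Set.range f → (∀ x ∈ φ.freeVars, ∃ j, f (σ x) = u j) →
      φ.eval r (f ∘ σ) → φ.eval (fun a b => r (f a) (f b)) σ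
  | and φ ψ, _, _, _, _, hneg, hφ, hk, hS, hσ, h => by
    simp only [depth, max_le_iff] at hk
    exact ⟨eval_comap_of_isExistsForall hf φ hneg.1 (fun s hs => hφ s (Or.inl hs)) hk.1 hS
        (fun x hx => hσ x (mem_union_left _ hx)) h.1,
      eval_comap_of_isExistsForall hf ψ hneg.2 (fun s hs => hφ s (Or.inr hs)) hk.2 hS
        (fun x hx => hσ x (mem_union_right _ hx)) h.2⟩
  | or φ ψ, _, _, _, _, hneg, hφ, hk, hS, hσ, h => by
    simp only [depth, max_le_iff] at hk
    exact h.imp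
      (eval_comap_of_isExistsForall hf φ hneg.1 (fun s hs => hφ s (Or.inl hs)) hk.1 hS
        fun x hx => hσ x (mem_union_left _ hx))
      (eval_comap_of_isExistsForall hf ψ hneg.2 (fun s hs => hφ s (Or.inr hs)) hk.2 hS
        fun x hx => hσ x (mem_union_right _ hx))
  | ex i φ, k + 1, _, u, σ, hneg, hφ, hk, hS, hσ, ⟨a, ha⟩ => by
    obtain ⟨b, hb, hab, hsub⟩ := exists_mem_witnesses_rankType_eq (r := r) (k := k) u a
    obtain ⟨w, rfl⟩ := hS hb
    have hmatch := exists_update_cons (fun x hx => (hσ x hx).imp fun _ h => ⟨h, h⟩) a (f w)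
    have hw : φ.eval r (f ∘ update σ i w) := by
      rw [comp_update]
      exact (eval_iff_of_rankType_eq φ (Nat.le_of_succ_le_succ hk) hab.symm hmatch).mp ha
    refine ⟨w, eval_comap_of_isExistsForall hf φ hneg (fun s hs => (hφ _ ⟨s, hs, rfl⟩).of_cons)
      (Nat.le_of_succ_le_succ hk) ((coe_subset.mpr hsub).trans hS) (fun x hx => ?_) hw⟩
    obtain ⟨j, -, hj⟩ := hmatch x hx
    exact ⟨j, (congrFun (comp_update f σ i w) x).trans hj⟩
  | ex _ _, 0, _, _, _, _, _, hk, _, _, _ => absurd hk (Nat.not_succ_le_zero _)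
  | all i φ, _, _, _, _, hneg, hφ, _, _, _, h =>
    eval_comap_of_exCount_eq_zero hf (.all i φ) hneg
      (exCount_eq_zero_of_forall_qstrings φ fun s hs ht =>
        absurd (List.rel_of_pairwise_cons (hφ _ ⟨s, hs, rfl⟩) ht) (by decide)) h
  | eq x y, _, _, _, _, hneg, _, _, _, _, h =>
    eval_comap_of_exCount_eq_zero hf (.eq x y) hneg rfl h
  | rel x y, _, _, _, _, hneg, _, _, _, _, h =>
    eval_comap_of_exCount_eq_zero hf (.rel x y) hneg rfl h
  | not φ, _, _, _, _, hneg, _, _, _, _, h =>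
    eval_comap_of_exCount_eq_zero hf (.not φ) hneg
      (by cases φ <;> first | rfl | exact nomatch hneg) h

end Fml

theorem Lambda12.isExistsForall {φ : Fml} (h : Lambda12 φ) : φ.IsExistsForall :=
  fun s hs => List.isChain_iff_pairwise.mp (isChain_ge_of_altCount (h.2 s hs))

theorem statement_12 {V : Type} [Fintype V] [Nonempty V] (r : V → V → Prop)
    (φ : Fml) (hφ : Lambda12 φ) (hdef : DDefines r φ) :
    logStar (Fintype.card V) ≤ φ.depth + logStar (logStar (Fintype.card V)) + 1 := by
  obtain ⟨hsentence, hmodels, hunique⟩ := hdef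
  let S : Finset V := insert (Classical.arbitrary V) (witnesses r φ.depth ![])
  have hS : DModels (fun a b : S => r a b) φ := fun σ =>
    φ.eval_comap_of_isExistsForall Subtype.val_injective hφ.1 hφ.isExistsForall le_rfl
      (fun v hv => ⟨⟨v, mem_insert_of_mem hv⟩, rfl⟩)
      (by simp [show φ.freeVars = ∅ from hsentence]) (hmodels _)
  obtain ⟨e, -⟩ : DIso r (fun a b : S => r a b) := by
    by_contra hiso
    exact hunique S inferInstance ⟨⟨_, mem_insert_self _ _⟩⟩ _ hiso hS
  apply logStar_le_of_le_iterate_two_pow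
  calc Fintype.card V = S.card := by rw [Fintype.card_congr e, Fintype.card_coe]
    _ ≤ (witnesses r φ.depth ![]).card + 1 := card_insert_le _ _
    _ ≤ _ := card_witnesses_add_one_le ![] (by simp)

end PaperFO
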